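/- Let A and B be lagrangian subspaces of (V,ω) with A ≠ B and A ∩ B ≠ 0. Let à be a complement of A ∩ B in A and B̃ a complement of A ∩ B in B, and set Ṽ = à + B̃. Then Ṽ is a symplectic subspace with Ṽ = à ⊕ B̃ (internal direct sum), V = Ṽ ⊕ Ṽ^ω, à and B̃ are lagrangian subspaces of Ṽ with à ∩ B̃ = 0, A ∩ B is a lagrangian subspace of the symplectic subspace Ṽ^ω, and A = à ⊕ (A ∩ B), B = B̃ ⊕ (A ∩ B). -/

import Mathlib

/-!
Everything except `Ṽ ⊕ Ṽ^ω = V` is lattice algebra with the rule `(E ⊔ F)^ω = E^ω ⊓ F^ω`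
and the modular law. The key point is `B̃ ∩ Ã^ω = 0`: a vector of `B̃` is orthogonal to
`A ∩ B ⊆ B`, so if it is also orthogonal to `Ã` it lies in `(Ã + A ∩ B)^ω = A`, hence in
`B̃ ∩ A ∩ B = 0`. Modularity then gives `Ṽ ∩ Ã^ω = Ã` and `Ṽ ∩ Ṽ^ω = Ã ∩ B̃^ω = 0`; for a
reflexive form in finite dimension this disjointness already forces `Ṽ + Ṽ^ω = V`.
Finally `(A ∩ B)^ω ∩ Ṽ^ω = (Ã + A ∩ B)^ω ∩ (B̃ + A ∩ B)^ω = A ∩ B`.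
-/

open Module

variable {V : Type*} [AddCommGroup V] [Module ℝ V]

/-- The symplectic orthogonal of a subspace `W`:
`{v ∈ V | ω v w = 0 for all w ∈ W}`. -/
def sorth (ω : LinearMap.BilinForm ℝ V) (W : Submodule ℝ V) : Submodule ℝ V where
  carrier := {v | ∀ w ∈ W, ω v w = 0}
  add_mem' := by
    intro a b ha hb w hw
    simp only [Set.mem_setOf_eq] at *
    simp [ha w hw, hb w hw]
  zero_mem' := by intro w hw; simp
  smul_mem' := by
    intro c a ha w hw
    simp only [Set.mem_setOf_eq] at *
    simp [ha w hw]

/-- Two subspaces are `ω`-orthogonal. -/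
def OrthSub (ω : LinearMap.BilinForm ℝ V) (E F : Submodule ℝ V) : Prop :=
  ∀ e ∈ E, ∀ f ∈ F, ω e f = 0

theorem inf_sup_eq_of_le_of_inf_eq_bot {α : Type*} [Lattice α] [OrderBot α] [IsModularLattice α]
    {a b c : α} (hac : a ≤ c) (hbc : b ⊓ c = ⊥) : c ⊓ (a ⊔ b) = a := by
  rw [inf_comm, sup_inf_assoc_of_le b hac, hbc, sup_bot_eq]

section

variable {ω : LinearMap.BilinForm ℝ V}

theorem sorth_antitone {E F : Submodule ℝ V} (h : E ≤ F) : sorth ω F ≤ sorth ω E :=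
  fun _ hv w hw => hv w (h hw)

theorem le_sorth_of_le {A E F : Submodule ℝ V} (hA : A = sorth ω A) (hE : E ≤ A) (hF : F ≤ A) :
    E ≤ sorth ω F :=
  hE.trans (hA.le.trans (sorth_antitone hF))

theorem sorth_sup (E F : Submodule ℝ V) : sorth ω (E ⊔ F) = sorth ω E ⊓ sorth ω F :=
  le_antisymm (le_inf (sorth_antitone le_sup_left) (sorth_antitone le_sup_right))
    fun v ⟨hE, hF⟩ w hw => by
      obtain ⟨e, he, f, hf, rfl⟩ := Submodule.mem_sup.mp hw
      rw [map_add, hE e he, hF f hf, add_zero]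

theorem sorth_eq_orthogonal (hω : ω.IsRefl) (W : Submodule ℝ V) :
    sorth ω W = ω.orthogonal W :=
  Submodule.ext fun _ => ⟨fun h w hw => hω _ _ (h w hw), fun h w hw => hω _ _ (h w hw)⟩

theorem sup_sorth_eq_top [FiniteDimensional ℝ V] (hω : ω.IsRefl) {W : Submodule ℝ V}
    (h : W ⊓ sorth ω W = ⊥) : W ⊔ sorth ω W = ⊤ := by
  rw [sorth_eq_orthogonal hω] at h ⊢
  exact ((LinearMap.BilinForm.isCompl_orthogonal_iff_disjoint hω).mpr
    (disjoint_iff.mpr h)).sup_eq_top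

theorem inf_sorth_eq_inf_of_sup_eq {A A' C F : Submodule ℝ V} (hA : A = sorth ω A)
    (hsup : A' ⊔ C = A) (hF : F ≤ sorth ω C) : F ⊓ sorth ω A' = F ⊓ A := by
  rw [hA, ← hsup, sorth_sup, inf_comm (sorth ω A'), ← inf_assoc, inf_eq_left.mpr hF]

theorem inf_sorth_eq_bot_of_complements {A B A' B' : Submodule ℝ V} (hA : A = sorth ω A)
    (hB : B = sorth ω B) (hA' : A' ⊔ (A ⊓ B) = A) (hB'₁ : B' ⊓ (A ⊓ B) = ⊥) (hB' : B' ≤ B) :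
    B' ⊓ sorth ω A' = ⊥ := by
  rw [inf_sorth_eq_inf_of_sup_eq hA hA' (le_sorth_of_le hB hB' inf_le_right), eq_bot_iff, ← hB'₁]
  exact le_inf inf_le_left (le_inf inf_le_right (inf_le_left.trans hB'))

end

theorem lagrangian_pair_splits_general [FiniteDimensional ℝ V]
    (ω : LinearMap.BilinForm ℝ V) (hωalt : ω.IsAlt)
    (A B : Submodule ℝ V) (hA : A = sorth ω A) (hB : B = sorth ω B)
    (A' B' : Submodule ℝ V)
    (hA'₁ : A' ⊓ (A ⊓ B) = ⊥) (hA'₂ : A' ⊔ (A ⊓ B) = A)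
    (hB'₁ : B' ⊓ (A ⊓ B) = ⊥) (hB'₂ : B' ⊔ (A ⊓ B) = B) :
    (A' ⊔ B') ⊓ sorth ω (A' ⊔ B') = ⊥ ∧
      A' ⊓ B' = ⊥ ∧
      (A' ⊔ B') ⊔ sorth ω (A' ⊔ B') = ⊤ ∧
      A' = sorth ω A' ⊓ (A' ⊔ B') ∧
      B' = sorth ω B' ⊓ (A' ⊔ B') ∧
      A ⊓ B = sorth ω (A ⊓ B) ⊓ sorth ω (A' ⊔ B') := by
  have hA'A : A' ≤ A := hA'₂ ▸ le_sup_left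
  have hB'B : B' ≤ B := hB'₂ ▸ le_sup_left
  have hB'A' : B' ⊓ sorth ω A' = ⊥ := inf_sorth_eq_bot_of_complements hA hB hA'₂ hB'₁ hB'B
  have hA'B' : A' ⊓ sorth ω B' = ⊥ :=
    inf_sorth_eq_bot_of_complements hB hA (by rwa [inf_comm B A]) (by rwa [inf_comm B A]) hA'A
  have hA'lag : A' = sorth ω A' ⊓ (A' ⊔ B') :=
    (inf_sup_eq_of_le_of_inf_eq_bot (le_sorth_of_le hA hA'A hA'A) hB'A').symm
  have hB'lag : B' = sorth ω B' ⊓ (A' ⊔ B') := by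
    rw [sup_comm]
    exact (inf_sup_eq_of_le_of_inf_eq_bot (le_sorth_of_le hB hB'B hB'B) hA'B').symm
  have hsymp : (A' ⊔ B') ⊓ sorth ω (A' ⊔ B') = ⊥ := by
    rw [sorth_sup, ← inf_assoc, inf_comm (A' ⊔ B'), ← hA'lag, hA'B']
  refine ⟨hsymp, ?_, sup_sorth_eq_top hωalt.isRefl hsymp, hA'lag, hB'lag, ?_⟩
  · rw [eq_bot_iff, ← hA'₁]
    exact le_inf inf_le_left (inf_le_inf hA'A hB'B)
  · rw [sorth_sup, inf_comm (sorth ω (A ⊓ B)), inf_inf_distrib_right, ← sorth_sup, ← sorth_sup,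
      hA'₂, hB'₂, ← hA, ← hB]

theorem lagrangian_pair_splits [FiniteDimensional ℝ V]
    (ω : LinearMap.BilinForm ℝ V) (hω : ω.Nondegenerate) (hωalt : ω.IsAlt)
    (A B : Submodule ℝ V) (hA : A = sorth ω A) (hB : B = sorth ω B)
    (hne : A ≠ B) (hint : A ⊓ B ≠ ⊥)
    (A' B' : Submodule ℝ V)
    (hA'₁ : A' ⊓ (A ⊓ B) = ⊥) (hA'₂ : A' ⊔ (A ⊓ B) = A)
    (hB'₁ : B' ⊓ (A ⊓ B) = ⊥) (hB'₂ : B' ⊔ (A ⊓ B) = B) :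
    (A' ⊔ B') ⊓ sorth ω (A' ⊔ B') = ⊥ ∧
      A' ⊓ B' = ⊥ ∧
      (A' ⊔ B') ⊔ sorth ω (A' ⊔ B') = ⊤ ∧
      A' = sorth ω A' ⊓ (A' ⊔ B') ∧
      B' = sorth ω B' ⊓ (A' ⊔ B') ∧
      A ⊓ B = sorth ω (A ⊓ B) ⊓ sorth ω (A' ⊔ B') :=
  lagrangian_pair_splits_general ω hωalt A B hA hB A' B' hA'₁ hA'₂ hB'₁ hB'₂
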